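/- Let G be a finite group and N ⊴ G such that N ∩ S_p ≤ Φ(S_p) for every prime p and Sylow p-subgroup S_p of G. Then the Fitting subgroup of G/N equals F(G)/N. -/

import Mathlib

/-!
The hypothesis forces `N ≤ Φ(G)`. Otherwise `G = MN` for a maximal subgroup `M`; pick a prime
`p ∣ [G : M]`, a Sylow `p`-subgroup `T` of `M` and a Sylow `S ⊇ T` of `G`. Since `T` maps onto
a Sylow subgroup of `G/N`, `S ≤ TN`, so `S = T(N ∩ S) = T` because `N ∩ S ≤ Φ(S)`,
contradicting `p ∣ [G : M]`.

With `N ≤ Φ(G)`, Gaschütz's argument shows that a normal `K ≥ N` with `K/N` nilpotent is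
nilpotent: for a Sylow `P` of `K`, `PN/N` is characteristic in `K/N`, so `PN ⊴ G`, and the
Frattini argument gives `G = N_G(P)·PN ≤ N_G(P)Φ(G)`, i.e. `P ⊴ G`. Applied to the preimage of
`F(G/N)` this gives one inclusion; the other holds as images of nilpotent normal subgroups are
nilpotent and normal.
-/

open Subgroup

namespace Sylow

variable {G : Type*} [Group G] {p : ℕ} [Fact p.Prime]

theorem le_map_subtype_sup_of_sup_eq_top [Finite G] {M N : Subgroup G} [N.Normal]
    (hMN : M ⊔ N = ⊤) (T : Sylow p M) (S : Sylow p G) (hTS : T.map M.subtype ≤ S) :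
    (S : Subgroup G) ≤ T.map M.subtype ⊔ N := by
  let f := QuotientGroup.mk' N
  have hsurj : Function.Surjective (f.comp M.subtype) := by
    intro x
    obtain ⟨g, rfl⟩ := QuotientGroup.mk'_surjective N x
    obtain ⟨m, hm, n, hn, rfl⟩ := mem_sup_of_normal_right.mp (hMN ▸ mem_top g)
    exact ⟨⟨m, hm⟩, QuotientGroup.eq.mpr (by simpa using hn)⟩
  have hST : map f S = map f (T.map M.subtype) := by
    rw [Subgroup.map_map, ← coe_mapSurjective hsurj]
    refine (T.mapSurjective hsurj).is_maximal' (S.2.map f) ?_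
    rw [coe_mapSurjective, ← Subgroup.map_map]
    exact map_mono hTS
  calc (S : Subgroup G) ≤ comap f (map f S) := le_comap_map _ _
    _ = T.map M.subtype ⊔ N := by rw [hST, QuotientGroup.comap_map_mk', sup_comm]

theorem normal_of_le_sup_frattini [Finite G] {H : Subgroup G} [H.Normal] (P : Sylow p H)
    (hH : H ≤ P.map H.subtype ⊔ frattini G) : (P.map H.subtype).Normal := by
  refine normalizer_eq_top_iff.mp (frattini_nongenerating ?_)
  rw [eq_top_iff, ← P.normalizer_sup_eq_top]
  exact sup_le le_sup_left (hH.trans (sup_le_sup_right le_normalizer _))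

theorem normal_map_subtype_of_isNilpotent [Finite G] {K : Subgroup G} [K.Normal]
    [Group.IsNilpotent K] (P : Sylow p K) : (P.map K.subtype).Normal :=
  have := P.characteristic_of_normal inferInstance
  ConjAct.normal_of_characteristic_of_normal

def restrict [Finite G] {H K : Subgroup G} (P : Sylow p K) (hHK : H ≤ K)
    (hPH : P.map K.subtype ≤ H) : Sylow p H :=
  (P.2.map K.subtype).comap_subtype.toSylow fun hdvd ↦ P.not_dvd_index <| by
    have hP : (P.map K.subtype).subgroupOf K = P := by
      rw [subgroupOf, comap_map_eq_self_of_injective K.subtype_injective]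
    rw [← hP, ← relIndex, ← relIndex_mul_relIndex _ _ _ hPH hHK]
    exact hdvd.mul_right _

theorem map_subtype_restrict [Finite G] {H K : Subgroup G} (P : Sylow p K) (hHK : H ≤ K)
    (hPH : P.map K.subtype ≤ H) : (P.restrict hHK hPH).map H.subtype = P.map K.subtype := by
  rw [restrict, IsPGroup.toSylow_coe]
  exact (subgroupOf_map_subtype _ _).trans (inf_of_le_left hPH)

end Sylow

theorem le_of_le_sup_of_inf_le_frattini {G : Type*} [Group G] [Finite G] {S T N : Subgroup G}
    [N.Normal] (hTS : T ≤ S) (hS : S ≤ T ⊔ N) (hN : N ⊓ S ≤ (frattini S).map S.subtype) :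
    S ≤ T := by
  have hN' : N.subgroupOf S ≤ frattini S := by
    rwa [← map_le_map_iff_of_injective S.subtype_injective, subgroupOf_map_subtype]
  have htop : T.subgroupOf S ⊔ frattini S = ⊤ := by
    refine eq_top_iff.mpr fun x _ ↦ ?_
    obtain ⟨t, ht, n, hn, hx⟩ := mem_sup_of_normal_right.mp (hS x.2)
    have hnS : n ∈ S := by
      simpa [← hx] using S.mul_mem (S.inv_mem (hTS ht)) x.2
    rw [show x = ⟨t, hTS ht⟩ * ⟨n, hnS⟩ from Subtype.ext hx.symm]
    exact mul_mem_sup ht (hN' hn)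
  exact subgroupOf_eq_top.mp (frattini_nongenerating htop)

section FiniteGroup

variable {G : Type*} [Group G] [Finite G] {N : Subgroup G} [N.Normal]

theorem le_of_isCoatom_of_inf_sylow_le_frattini
    (h : ∀ (p : ℕ), p.Prime → ∀ S : Sylow p G,
      N ⊓ (S : Subgroup G) ≤ (frattini ↥(S : Subgroup G)).map (S : Subgroup G).subtype)
    {M : Subgroup G} (hM : IsCoatom M) : N ≤ M := by
  by_contra hNM
  have hMN : M ⊔ N = ⊤ := hM.2 _ (left_lt_sup.mpr hNM)
  obtain ⟨p, hp, hpM⟩ := Nat.exists_prime_and_dvd (mt index_eq_one.mp hM.1)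
  have := Fact.mk hp
  obtain ⟨T⟩ : Nonempty (Sylow p M) := inferInstance
  obtain ⟨S, hTS⟩ := (T.2.map M.subtype).exists_le_sylow
  have hST : (S : Subgroup G) ≤ T.map M.subtype := le_of_le_sup_of_inf_le_frattini hTS
    (Sylow.le_map_subtype_sup_of_sup_eq_top hMN T S hTS) (h p hp S)
  exact S.not_dvd_index (hpM.trans (index_dvd_of_le (hST.trans (map_subtype_le _))))

theorem le_frattini_of_inf_sylow_le_frattini
    (h : ∀ (p : ℕ), p.Prime → ∀ S : Sylow p G,
      N ⊓ (S : Subgroup G) ≤ (frattini ↥(S : Subgroup G)).map (S : Subgroup G).subtype) :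
    N ≤ frattini G :=
  le_iInf₂ fun _ hM ↦ le_of_isCoatom_of_inf_sylow_le_frattini h hM

theorem isNilpotent_of_isNilpotent_map_of_le_frattini {K : Subgroup G} [K.Normal]
    (hN : N ≤ frattini G) (hNK : N ≤ K) (hK : Group.IsNilpotent (K.map (QuotientGroup.mk' N))) :
    Group.IsNilpotent K := by
  refine ((Group.isNilpotent_of_finite_tfae (G := K)).out 0 3).mpr ?_
  intro p _ P
  set P' := P.map K.subtype
  have hP'N : (P'.map (QuotientGroup.mk' N)).Normal := by
    have : (K.map (QuotientGroup.mk' N)).Normal :=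
      ‹K.Normal›.map _ (QuotientGroup.mk'_surjective N)
    let PN := P.mapSurjective ((QuotientGroup.mk' N).subgroupMap_surjective K)
    convert PN.normal_map_subtype_of_isNilpotent using 1
    rw [Sylow.coe_mapSurjective, Subgroup.map_map, Subgroup.map_map]
    rfl
  have : (P' ⊔ N).Normal := by
    rw [sup_comm P' N, ← QuotientGroup.comap_map_mk']
    exact hP'N.comap _
  let Q := P.restrict (sup_le (map_subtype_le _) hNK) le_sup_left
  have hQ : (Q : Subgroup (P' ⊔ N : Subgroup G)).map (P' ⊔ N).subtype = P' :=
    P.map_subtype_restrict _ _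
  have hP' : P'.Normal := hQ ▸ Q.normal_of_le_sup_frattini (hQ ▸ sup_le_sup_left hN _)
  exact hP'.of_map_subtype

end FiniteGroup

/-- If `N ⊴ G` satisfies `N ∩ S_p ≤ Φ(S_p)` for every prime `p` and Sylow `p`-subgroup `S_p`,
then the Fitting subgroup of `G/N` equals `F(G)/N` (where the Fitting subgroup is
characterized as the largest nilpotent normal subgroup). -/
theorem fitting_quotient_eq {G : Type*} [Group G] [Finite G]
    (N : Subgroup G) [N.Normal]
    (h : ∀ (p : ℕ), p.Prime → ∀ S : Sylow p G,
      N ⊓ (S : Subgroup G) ≤ (frattini ↥(S : Subgroup G)).map (S : Subgroup G).subtype)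
    (F : Subgroup G) (hFnormal : F.Normal) (hFnil : Group.IsNilpotent F)
    (hFmax : ∀ K : Subgroup G, K.Normal → Group.IsNilpotent K → K ≤ F)
    (F' : Subgroup (G ⧸ N)) (hF'normal : F'.Normal) (hF'nil : Group.IsNilpotent F')
    (hF'max : ∀ K : Subgroup (G ⧸ N), K.Normal → Group.IsNilpotent K → K ≤ F') :
    F' = Subgroup.map (QuotientGroup.mk' N) F := by
  have hsurj := QuotientGroup.mk'_surjective N
  have hF'eq : (F'.comap (QuotientGroup.mk' N)).map (QuotientGroup.mk' N) = F' :=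
    map_comap_eq_self_of_surjective hsurj F'
  apply le_antisymm
  · have := hF'normal.comap (QuotientGroup.mk' N)
    have hK := isNilpotent_of_isNilpotent_map_of_le_frattini
      (le_frattini_of_inf_sylow_le_frattini h) (QuotientGroup.le_comap_mk' N F') (by rwa [hF'eq])
    exact hF'eq ▸ map_mono (hFmax _ this hK)
  · exact hF'max _ (hFnormal.map _ hsurj)
      (Group.nilpotent_of_surjective _ ((QuotientGroup.mk' N).subgroupMap_surjective F))
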